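/- arXiv:2510.11061 — 6 statements merged into one kernel-verified Lean document; each statement's English description precedes it below -/
import Mathlib

section
/- If A is a roughly shift-invariant discrete set in ℝ^d with constant L (i.e., for every x ∈ ℝ^d there is a bijection σ_x : A → A with ‖a + x − σ_x(a)‖_∞ < L for all a ∈ A), then there exists K < ∞ such that every half-open unit cube Q(x,1) contains fewer than K points of A. -/
open Set

/-- The half-open cube `Q(b,r)` in `ℝ^d`. -/
def Qc {d : ℕ} (b : Fin d → ℝ) (r : ℝ) : Set (Fin d → ℝ) :=
  {y | ∀ j, b j ≤ y j ∧ y j < b j + r}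

/-- `A` is discrete: its intersection with any ball is finite. -/
def IsDiscreteSet {d : ℕ} (A : Set (Fin d → ℝ)) : Prop :=
  ∀ (x : Fin d → ℝ) (r : ℝ), (A ∩ Metric.ball x r).Finite

/-- `A` is roughly shift-invariant with constant `L` (sup norm). -/
def RSI {d : ℕ} (A : Set (Fin d → ℝ)) (L : ℝ) : Prop :=
  ∀ x : Fin d → ℝ, ∃ σ : A ≃ A, ∀ a : A, ‖(a : Fin d → ℝ) + x - (σ a : Fin d → ℝ)‖ < L

theorem stmt0 {d : ℕ} (A : Set (Fin d → ℝ)) (L : ℝ)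
    (hdisc : IsDiscreteSet A) (hA : RSI A L) :
    ∃ K : ℕ, ∀ x : Fin d → ℝ, (A ∩ Qc x 1).ncard < K := by
  have hfin : (A ∩ Metric.ball (0 : Fin d → ℝ) (L + 2)).Finite := hdisc 0 (L + 2)
  refine ⟨(A ∩ Metric.ball (0 : Fin d → ℝ) (L + 2)).ncard + 1, fun x => ?_⟩
  refine Nat.lt_succ_of_le ?_
  obtain ⟨σ, hσ⟩ := hA (-x)
  classical
  refine Set.ncard_le_ncard_of_injOn
    (fun a => if h : a ∈ A then ((σ ⟨a, h⟩ : A) : Fin d → ℝ) else a) ?_ ?_ hfin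
  · rintro a ⟨haA, haQ⟩
    simp only [dif_pos haA]
    refine ⟨(σ ⟨a, haA⟩).2, ?_⟩
    rw [Metric.mem_ball, dist_zero_right]
    have h1 : ‖(a : Fin d → ℝ) + (-x) - ((σ ⟨a, haA⟩ : A) : Fin d → ℝ)‖ < L := hσ ⟨a, haA⟩
    have h2 : ‖a + (-x)‖ ≤ 1 := by
      refine (pi_norm_le_iff_of_nonneg zero_le_one).2 fun i => ?_
      have hi := haQ i
      simp only [Pi.add_apply, Pi.neg_apply, Real.norm_eq_abs, abs_le]
      constructor <;> linarith [hi.1, hi.2]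
    calc ‖((σ ⟨a, haA⟩ : A) : Fin d → ℝ)‖
        = ‖(a + (-x)) - ((a + (-x)) - ((σ ⟨a, haA⟩ : A) : Fin d → ℝ))‖ := by ring_nf
      _ ≤ ‖a + (-x)‖ + ‖(a + (-x)) - ((σ ⟨a, haA⟩ : A) : Fin d → ℝ)‖ := norm_sub_le _ _
      _ < L + 2 := by linarith
  · rintro a ⟨haA, -⟩ b ⟨hbA, -⟩ hab
    simp only [dif_pos haA, dif_pos hbA] at hab
    have : σ ⟨a, haA⟩ = σ ⟨b, hbA⟩ := Subtype.ext hab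
    have := σ.injective this
    exact congrArg Subtype.val this
end

section
/- If A ⊆ ℝ^d is roughly shift-invariant with constant L, then for all sufficiently large N ∈ ℕ and every x ∈ ℝ^d, |#(A ∩ Q(x,N)) − #(A ∩ Q(0,N))| < N^{d − 1/2}. -/
open Set

lemma qc_subset_ball {d : ℕ} (b : Fin d → ℝ) (r : ℝ) :
    Qc b r ⊆ Metric.ball b (|r| + 1) := by
  intro z hz
  have h : dist z b ≤ |r| := by
    rw [dist_pi_le_iff (abs_nonneg r)]
    intro i
    rw [Real.dist_eq, abs_of_nonneg (by linarith [(hz i).1])]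
    have := (hz i).2
    have := le_abs_self r
    linarith
  exact lt_of_le_of_lt h (lt_add_one _)

lemma finQc {d : ℕ} {A : Set (Fin d → ℝ)} (hdisc : IsDiscreteSet A) (b : Fin d → ℝ) (r : ℝ) :
    (A ∩ Qc b r).Finite :=
  (hdisc b (|r| + 1)).subset (inter_subset_inter_right _ (qc_subset_ball b r))


lemma unit_bound {d : ℕ} {A : Set (Fin d → ℝ)} {L : ℝ}
    (hdisc : IsDiscreteSet A) (hA : RSI A L) (hL : 1 ≤ L) :
    ∃ C : ℕ, ∀ y : Fin d → ℝ, (A ∩ Qc y 1).ncard ≤ C := by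
  classical
  refine ⟨(A ∩ Metric.ball 0 (2 * L + 2)).ncard, fun y => ?_⟩
  obtain ⟨σ, hσ⟩ := hA (-y)
  refine Set.ncard_le_ncard_of_injOn
    (fun a => if h : a ∈ A then (σ ⟨a, h⟩ : Fin d → ℝ) else a) (fun a ha => ?_)
    (fun a ha b hb hab => ?_) (hdisc 0 (2 * L + 2))
  · simp only [dif_pos ha.1]
    refine ⟨(σ ⟨a, ha.1⟩).2, ?_⟩
    rw [Metric.mem_ball, dist_zero_right]
    have hv := hσ ⟨a, ha.1⟩
    have hay : ‖a - y‖ ≤ 1 := by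
      rw [pi_norm_le_iff_of_nonneg zero_le_one]
      intro i
      have h1 := (ha.2 i).1
      have h2 := (ha.2 i).2
      rw [Real.norm_eq_abs, abs_le]
      constructor <;> simp only [Pi.sub_apply] <;> linarith
    have : (σ ⟨a, ha.1⟩ : Fin d → ℝ) = (a - y) - (a + (-y) - (σ ⟨a, ha.1⟩ : Fin d → ℝ)) := by
      abel
    rw [this]
    calc ‖(a - y) - (a + (-y) - (σ ⟨a, ha.1⟩ : Fin d → ℝ))‖
        ≤ ‖a - y‖ + ‖a + (-y) - (σ ⟨a, ha.1⟩ : Fin d → ℝ)‖ := norm_sub_le _ _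
      _ < 1 + L := by linarith
      _ < 2 * L + 2 := by linarith
  · simp only [dif_pos ha.1, dif_pos hb.1] at hab
    have := σ.injective (Subtype.coe_injective hab)
    exact congrArg Subtype.val this

lemma shift_bound {d : ℕ} {A : Set (Fin d → ℝ)} {L : ℝ}
    (hdisc : IsDiscreteSet A) (hA : RSI A L)
    (x y : Fin d → ℝ) (r : ℝ) :
    (A ∩ Qc y r).ncard ≤ (A ∩ Qc (fun j => y j + x j - L) (r + 2 * L)).ncard := by
  classical
  obtain ⟨σ, hσ⟩ := hA x
  refine Set.ncard_le_ncard_of_injOn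
    (fun a => if h : a ∈ A then (σ ⟨a, h⟩ : Fin d → ℝ) else a) (fun a ha => ?_)
    (fun a ha b hb hab => ?_) (finQc hdisc _ _)
  · simp only [dif_pos ha.1]
    refine ⟨(σ ⟨a, ha.1⟩).2, fun j => ?_⟩
    have hv := hσ ⟨a, ha.1⟩
    have hvj : ‖(a + x - (σ ⟨a, ha.1⟩ : Fin d → ℝ)) j‖ < L :=
      lt_of_le_of_lt (norm_le_pi_norm (a + x - (σ ⟨a, ha.1⟩ : Fin d → ℝ)) j) hv
    rw [Real.norm_eq_abs] at hvj
    simp only [Pi.add_apply, Pi.sub_apply] at hvj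
    rw [abs_lt] at hvj
    have h1 := (ha.2 j).1
    have h2 := (ha.2 j).2
    constructor
    · show y j + x j - L ≤ _
      linarith [hvj.1, hvj.2]
    · show _ < y j + x j - L + (r + 2 * L)
      linarith [hvj.1, hvj.2]
  · simp only [dif_pos ha.1, dif_pos hb.1] at hab
    exact congrArg Subtype.val (σ.injective (Subtype.coe_injective hab))


lemma ncard_biUnion_le_aux {α ι : Type*} (S : Finset ι) (t : ι → Set α) (C : ℕ)
    (h : ∀ i, (t i).ncard ≤ C) : (⋃ i ∈ S, t i).ncard ≤ C * S.card := by
  classical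
  induction S using Finset.induction with
  | empty => simp
  | @insert a S ha ih =>
    rw [Finset.set_biUnion_insert, Finset.card_insert_of_notMem ha, Nat.mul_add, Nat.mul_one]
    calc (t a ∪ ⋃ i ∈ S, t i).ncard ≤ (t a).ncard + (⋃ i ∈ S, t i).ncard :=
          Set.ncard_union_le _ _
      _ ≤ C + C * S.card := Nat.add_le_add (h a) ih
      _ = C * S.card + C := Nat.add_comm _ _

lemma box_bound {d : ℕ} {A : Set (Fin d → ℝ)} (hdisc : IsDiscreteSet A) {C : ℕ}
    (hC : ∀ y : Fin d → ℝ, (A ∩ Qc y 1).ncard ≤ C)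
    (b : Fin d → ℝ) (r : Fin d → ℝ) (n : Fin d → ℕ) (hn : ∀ j, r j ≤ n j) :
    (A ∩ {z | ∀ j, b j ≤ z j ∧ z j < b j + r j}).ncard ≤ C * ∏ j, n j := by
  classical
  set S : Finset (Fin d → ℕ) := Fintype.piFinset (fun j => Finset.range (n j)) with hS
  have hsub : (A ∩ {z | ∀ j, b j ≤ z j ∧ z j < b j + r j}) ⊆
      ⋃ k ∈ S, A ∩ Qc (fun j => b j + k j) 1 := by
    rintro z ⟨hzA, hz⟩
    refine mem_iUnion₂.mpr ⟨fun j => ⌊z j - b j⌋.toNat, ?_, hzA, fun j => ?_⟩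
    · rw [hS, Fintype.mem_piFinset]
      intro j
      rw [Finset.mem_range]
      have h1 : (0:ℝ) ≤ z j - b j := by linarith [(hz j).1]
      have h2 : z j - b j < n j := by linarith [(hz j).2, hn j]
      have h0 := Int.floor_nonneg.mpr h1
      have : (⌊z j - b j⌋.toNat : ℝ) ≤ z j - b j := by
        rw [show ((⌊z j - b j⌋.toNat : ℕ) : ℝ) = ((⌊z j - b j⌋.toNat : ℤ) : ℝ) by push_cast; ring,
          Int.toNat_of_nonneg h0]
        exact Int.floor_le _
      exact_mod_cast lt_of_le_of_lt this h2
    · have h1 : (0:ℝ) ≤ z j - b j := by linarith [(hz j).1]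
      have hfl : (⌊z j - b j⌋.toNat : ℝ) = ⌊z j - b j⌋ := by
        exact_mod_cast Int.toNat_of_nonneg (Int.floor_nonneg.mpr h1)
      constructor
      · dsimp only; rw [hfl]; linarith [Int.floor_le (z j - b j)]
      · dsimp only; rw [hfl]; linarith [Int.lt_floor_add_one (z j - b j)]
  calc (A ∩ {z | ∀ j, b j ≤ z j ∧ z j < b j + r j}).ncard
      ≤ (⋃ k ∈ S, A ∩ Qc (fun j => b j + k j) 1).ncard := by
        refine Set.ncard_le_ncard hsub (Set.Finite.biUnion S.finite_toSet ?_)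
        intro k _
        exact finQc hdisc _ _
    _ ≤ C * S.card := ncard_biUnion_le_aux S _ C (fun k => hC _)
    _ = C * ∏ j, n j := by rw [hS]; simp [Fintype.card_piFinset]


lemma shell_bound {d : ℕ} {A : Set (Fin d → ℝ)} (hdisc : IsDiscreteSet A) {C : ℕ}
    (hC : ∀ y : Fin d → ℝ, (A ∩ Qc y 1).ncard ≤ C) {L : ℝ} (hL : 1 ≤ L)
    (y : Fin d → ℝ) (N : ℕ) :
    (A ∩ (Qc (fun j => y j - L) ((N : ℝ) + 2 * L) \ Qc y (N : ℝ))).ncard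
      ≤ (2 * (C * (⌈L⌉₊ * (N + 2 * ⌈L⌉₊) ^ (d - 1)))) * d := by
  classical
  set m : ℕ := ⌈L⌉₊ with hm
  have hLm : L ≤ m := Nat.le_ceil L
  set P : ℕ := C * (m * (N + 2 * m) ^ (d - 1)) with hP
  -- boxes
  set lenf : Fin d → (Fin d → ℝ) := fun j => Function.update (fun _ => (N : ℝ) + 2 * L) j L
    with hlenf
  set Bm : Fin d → Set (Fin d → ℝ) := fun j =>
    {z | ∀ i, y i - L ≤ z i ∧ z i < (y i - L) + lenf j i} with hBm
  set Bp : Fin d → Set (Fin d → ℝ) := fun j =>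
    {z | ∀ i, Function.update (fun i => y i - L) j (y j + N) i ≤ z i ∧
      z i < Function.update (fun i => y i - L) j (y j + N) i + lenf j i} with hBp
  have hn : ∀ j i, lenf j i ≤ (Function.update (fun _ => N + 2 * m) j m : Fin d → ℕ) i := by
    intro j i
    by_cases hij : i = j
    · subst hij; simp [hlenf, hLm]
    · simp only [hlenf, Function.update_of_ne hij]
      push_cast
      linarith
  have hprod : ∀ j : Fin d, (∏ i, (Function.update (fun _ => N + 2 * m) j m : Fin d → ℕ) i)
      = m * (N + 2 * m) ^ (d - 1) := by
    intro j
    rw [Finset.prod_update_of_mem (Finset.mem_univ j), Finset.prod_const]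
    congr 1
    rw [Finset.card_univ_diff]
    simp
  have hbox : ∀ j : Fin d, (A ∩ Bm j).ncard ≤ P ∧ (A ∩ Bp j).ncard ≤ P := by
    intro j
    constructor
    · rw [hP, ← hprod j]
      exact box_bound hdisc hC _ _ _ (hn j)
    · rw [hP, ← hprod j]
      exact box_bound hdisc hC _ _ _ (hn j)
  have hsub : A ∩ (Qc (fun j => y j - L) ((N : ℝ) + 2 * L) \ Qc y (N : ℝ)) ⊆
      ⋃ j ∈ (Finset.univ : Finset (Fin d)), ((A ∩ Bm j) ∪ (A ∩ Bp j)) := by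
    rintro z ⟨hzA, hzbig, hzsmall⟩
    simp only [Qc, mem_setOf_eq, not_forall] at hzsmall
    obtain ⟨j, hj⟩ := hzsmall
    have hb1 : ∀ i, y i - L ≤ z i := fun i => (hzbig i).1
    have hb2 : ∀ i, z i < y i - L + ((N : ℝ) + 2 * L) := fun i => (hzbig i).2
    rw [not_and_or, not_le, not_lt] at hj
    refine mem_iUnion₂.mpr ⟨j, Finset.mem_univ j, ?_⟩
    rcases hj with hj | hj
    · left
      refine ⟨hzA, fun i => ?_⟩
      by_cases hij : i = j
      · subst hij
        simp only [hlenf, hBm, Function.update_self]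
        exact ⟨hb1 i, by linarith⟩
      · simp only [hlenf, hBm, Function.update_of_ne hij]
        exact ⟨hb1 i, by linarith [hb2 i]⟩
    · right
      refine ⟨hzA, fun i => ?_⟩
      by_cases hij : i = j
      · subst hij
        simp only [hlenf, hBp, Function.update_self]
        exact ⟨hj, by linarith [hb2 i]⟩
      · simp only [hlenf, hBp, Function.update_of_ne hij]
        exact ⟨hb1 i, by linarith [hb2 i]⟩
  have hfinbox : ∀ (lo : Fin d → ℝ) (len : Fin d → ℝ), (∀ i, len i ≤ (N : ℝ) + 2 * L) →
      (A ∩ {z | ∀ i, lo i ≤ z i ∧ z i < lo i + len i}).Finite := by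
    intro lo len hlen
    refine (finQc hdisc lo ((N : ℝ) + 2 * L)).subset (inter_subset_inter_right _ ?_)
    intro z hz
    exact fun i => ⟨(hz i).1, by linarith [(hz i).2, hlen i]⟩
  have hlenle : ∀ j i, lenf j i ≤ (N : ℝ) + 2 * L := by
    intro j i
    by_cases hij : i = j
    · subst hij; simp [hlenf]; linarith [Nat.cast_nonneg (α := ℝ) N]
    · simp [hlenf, Function.update_of_ne hij]
  calc (A ∩ (Qc (fun j => y j - L) ((N : ℝ) + 2 * L) \ Qc y (N : ℝ))).ncard
      ≤ (⋃ j ∈ (Finset.univ : Finset (Fin d)), ((A ∩ Bm j) ∪ (A ∩ Bp j))).ncard := by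
        refine Set.ncard_le_ncard hsub (Set.Finite.biUnion Finset.univ.finite_toSet ?_)
        intro j _
        exact ((hfinbox _ _ (hlenle j)).union (hfinbox _ _ (hlenle j)))
    _ ≤ (2 * P) * Finset.univ.card := by
        refine ncard_biUnion_le_aux _ _ _ (fun j => ?_)
        calc ((A ∩ Bm j) ∪ (A ∩ Bp j)).ncard ≤ (A ∩ Bm j).ncard + (A ∩ Bp j).ncard :=
              Set.ncard_union_le _ _
          _ ≤ P + P := Nat.add_le_add (hbox j).1 (hbox j).2
          _ = 2 * P := (Nat.two_mul P).symm
    _ = (2 * P) * d := by simp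


lemma key_bound {d : ℕ} {A : Set (Fin d → ℝ)} {L : ℝ} {C : ℕ}
    (hdisc : IsDiscreteSet A) (hA : RSI A L)
    (hC : ∀ y : Fin d → ℝ, (A ∩ Qc y 1).ncard ≤ C) (hL : 1 ≤ L)
    (u v : Fin d → ℝ) (N : ℕ) :
    (A ∩ Qc u (N : ℝ)).ncard ≤ (A ∩ Qc v (N : ℝ)).ncard
      + (2 * (C * (⌈L⌉₊ * (N + 2 * ⌈L⌉₊) ^ (d - 1)))) * d := by
  have h1 : (A ∩ Qc u (N : ℝ)).ncard ≤ (A ∩ Qc (fun j => v j - L) ((N : ℝ) + 2 * L)).ncard := by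
    have := shift_bound hdisc hA (v - u) u (N : ℝ)
    have heq : (fun j => u j + (v - u) j - L) = fun j => v j - L := by
      funext j; simp only [Pi.sub_apply]; ring
    rwa [heq] at this
  have h2 : A ∩ Qc (fun j => v j - L) ((N : ℝ) + 2 * L) ⊆
      (A ∩ Qc v (N : ℝ)) ∪ (A ∩ (Qc (fun j => v j - L) ((N : ℝ) + 2 * L) \ Qc v (N : ℝ))) := by
    rintro z ⟨hzA, hz⟩
    by_cases hzs : z ∈ Qc v (N : ℝ)
    · exact Or.inl ⟨hzA, hzs⟩
    · exact Or.inr ⟨hzA, hz, hzs⟩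
  have h3 : (A ∩ Qc (fun j => v j - L) ((N : ℝ) + 2 * L)).ncard ≤
      (A ∩ Qc v (N : ℝ)).ncard
      + (A ∩ (Qc (fun j => v j - L) ((N : ℝ) + 2 * L) \ Qc v (N : ℝ))).ncard := by
    refine le_trans (Set.ncard_le_ncard h2 ?_) (Set.ncard_union_le _ _)
    exact (finQc hdisc _ _).union ((finQc hdisc _ _).subset
      (inter_subset_inter_right _ diff_subset))
  exact le_trans h1 (le_trans h3 (Nat.add_le_add_left (shell_bound hdisc hC hL v N) _))


theorem stmt3 {d : ℕ} (A : Set (Fin d → ℝ)) (L : ℝ)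
    (hdisc : IsDiscreteSet A) (hA : RSI A L) :
    ∃ N₀ : ℕ, ∀ N : ℕ, N₀ ≤ N → ∀ x : Fin d → ℝ,
      |((A ∩ Qc x N).ncard : ℝ) - ((A ∩ Qc 0 N).ncard : ℝ)|
        < (N : ℝ) ^ ((d : ℝ) - 1 / 2) := by
  classical
  rcases Nat.eq_zero_or_pos d with hd | hd
  · subst hd
    refine ⟨1, fun N hN x => ?_⟩
    have hx : Qc x (N : ℝ) = Qc (0 : Fin 0 → ℝ) (N : ℝ) := by
      ext z
      simp only [Qc, mem_setOf_eq]
      exact ⟨fun _ j => j.elim0, fun _ j => j.elim0⟩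
    rw [hx, sub_self, abs_zero]
    apply Real.rpow_pos_of_pos
    exact_mod_cast Nat.lt_of_lt_of_le Nat.zero_lt_one hN
  · set L' := max L 1 with hL'def
    have hA' : RSI A L' := fun z => by
      obtain ⟨σ, hσ⟩ := hA z
      exact ⟨σ, fun a => lt_of_lt_of_le (hσ a) (le_max_left _ _)⟩
    have hL' : 1 ≤ L' := le_max_right _ _
    obtain ⟨C, hC⟩ := unit_bound hdisc hA' hL'
    set m : ℕ := ⌈L'⌉₊ with hm
    set B : ℕ := 2 * (C * (m * (2 * m + 1) ^ (d - 1))) * d with hB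
    refine ⟨B ^ 2 + 1, fun N hN x => ?_⟩
    have hN1 : 1 ≤ N := le_trans (Nat.le_add_left 1 _) hN
    set K : ℕ := 2 * (C * (m * (N + 2 * m) ^ (d - 1))) * d with hK
    have h1 := key_bound hdisc hA' hC hL' (0 : Fin d → ℝ) x N
    have h2 := key_bound hdisc hA' hC hL' x (0 : Fin d → ℝ) N
    rw [← hm, ← hK] at h1 h2
    have h1' : ((A ∩ Qc 0 (N : ℝ)).ncard : ℝ) ≤ ((A ∩ Qc x (N : ℝ)).ncard : ℝ) + (K : ℝ) := by
      exact_mod_cast h1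
    have h2' : ((A ∩ Qc x (N : ℝ)).ncard : ℝ) ≤ ((A ∩ Qc 0 (N : ℝ)).ncard : ℝ) + (K : ℝ) := by
      exact_mod_cast h2
    have habs : |((A ∩ Qc x (N : ℝ)).ncard : ℝ) - ((A ∩ Qc 0 (N : ℝ)).ncard : ℝ)| ≤ (K : ℝ) := by
      rw [abs_sub_le_iff]
      constructor <;> linarith
    have hKB : K ≤ B * N ^ (d - 1) := by
      rw [hK, hB]
      have hstep : (N + 2 * m) ^ (d - 1) ≤ (2 * m + 1) ^ (d - 1) * N ^ (d - 1) := by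
        rw [← Nat.mul_pow]
        apply Nat.pow_le_pow_left
        calc N + 2 * m ≤ N + 2 * m * N := by
              have : 2 * m ≤ 2 * m * N := Nat.le_mul_of_pos_right _ hN1
              omega
          _ = (2 * m + 1) * N := by ring
      calc 2 * (C * (m * (N + 2 * m) ^ (d - 1))) * d
          ≤ 2 * (C * (m * ((2 * m + 1) ^ (d - 1) * N ^ (d - 1)))) * d := by
            apply Nat.mul_le_mul_right
            apply Nat.mul_le_mul_left
            apply Nat.mul_le_mul_left
            apply Nat.mul_le_mul_left
            exact hstep
        _ = 2 * (C * (m * (2 * m + 1) ^ (d - 1))) * d * N ^ (d - 1) := by ring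
    have hBN : (B : ℝ) < Real.sqrt N := by
      rw [Real.lt_sqrt (Nat.cast_nonneg B)]
      have h : (B ^ 2 : ℕ) < N := lt_of_lt_of_le (Nat.lt_succ_self _) hN
      exact_mod_cast h
    have hNpos : (0 : ℝ) < N := by exact_mod_cast hN1
    have hpow : (N : ℝ) ^ ((d : ℝ) - 1 / 2) = (N : ℝ) ^ (d - 1) * Real.sqrt N := by
      rw [show (d : ℝ) - 1 / 2 = ((d - 1 : ℕ) : ℝ) + 1 / 2 by
        rw [Nat.cast_sub hd]; push_cast; ring]
      rw [Real.rpow_add hNpos, Real.rpow_natCast, Real.sqrt_eq_rpow]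
    have hpowpos : (0 : ℝ) < (N : ℝ) ^ (d - 1) := pow_pos hNpos _
    calc |((A ∩ Qc x (N : ℝ)).ncard : ℝ) - ((A ∩ Qc 0 (N : ℝ)).ncard : ℝ)|
        ≤ (K : ℝ) := habs
      _ ≤ (B : ℝ) * (N : ℝ) ^ (d - 1) := by
          have : ((B * N ^ (d - 1) : ℕ) : ℝ) = (B : ℝ) * (N : ℝ) ^ (d - 1) := by push_cast; ring
          rw [← this]
          exact_mod_cast hKB
      _ < Real.sqrt N * (N : ℝ) ^ (d - 1) := by
          exact mul_lt_mul_of_pos_right hBN hpowpos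
      _ = (N : ℝ) ^ ((d : ℝ) - 1 / 2) := by rw [hpow]; ring
end

section
/- For every nonempty roughly shift-invariant discrete set A ⊆ ℝ^d there exists a number D > 0 such that #(A ∩ Q(x,T)) / T^d → D as T → ∞, uniformly with respect to x ∈ ℝ^d. -/
open Set

/-! Moving a cube costs at most `2L` in edge length: the bijections of `RSI` move points by
less than `L` in each coordinate, so `N(x,T) ≤ N(z,T + 2L)` for `N(x,T) = #(A ∩ Q(x,T))`.
Cutting a cube of edge `nT` into `n^d` cubes of edge `T` then gives
`n^d N(z,T - 2L) ≤ N(x,nT) ≤ n^d N(z,T + 2L)`, so for `T ≪ S` the densities `N(x,S)/S^d` and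
`N(y,T)/T^d` differ by a factor close to `1`, uniformly in `x` and `y`. This uniform Cauchy
criterion yields the limit `D`; since `A` is nonempty, every cube of edge `> 2L` meets `A`,
which keeps `D` away from `0`. -/

open Filter Topology

theorem Filter.Tendsto.eventually_eventually {α β γ : Type*} [TopologicalSpace γ] {la : Filter α}
    {lb : Filter β} {g : α → β → γ} {h : α → γ} {c : γ} {p : γ → Prop}
    (hg : ∀ a, Tendsto (g a) lb (𝓝 (h a))) (hh : Tendsto h la (𝓝 c)) (hp : ∀ᶠ y in 𝓝 c, p y) :
    ∀ᶠ a in la, ∀ᶠ b in lb, p (g a b) :=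
  (hh.eventually (eventually_eventually_nhds.2 hp)).mono fun a ha => (hg a).eventually ha

theorem tendsto_add_div_self_atTop (a : ℝ) : Tendsto (fun S : ℝ => (S + a) / S) atTop (𝓝 1) := by
  have h : Tendsto (fun S : ℝ => 1 + a / S) atTop (𝓝 (1 + 0)) :=
    tendsto_const_nhds.add (tendsto_const_nhds.div_atTop tendsto_id)
  rw [add_zero] at h
  refine h.congr' ?_
  filter_upwards [eventually_ne_atTop 0] with S hS
  field_simp

theorem tendsto_div_add_self_atTop (a : ℝ) : Tendsto (fun T : ℝ => T / (T + a)) atTop (𝓝 1) := by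
  simpa using (tendsto_add_div_self_atTop a).inv₀ one_ne_zero

theorem exists_forall_eventually_abs_sub_le {ι β : Type*} [Nonempty ι] [SemilatticeSup β]
    [Nonempty β] {f : ι → β → ℝ}
    (hf : ∀ ε > 0, ∀ᶠ t in atTop, ∀ᶠ s in atTop, ∀ x y, |f x s - f y t| ≤ ε) :
    ∃ D, ∀ ε > 0, ∀ᶠ t in atTop, ∀ x, |f x t - D| ≤ ε := by
  obtain ⟨x₀⟩ := ‹Nonempty ι›
  have hcauchy : CauchySeq (f x₀) := by
    refine Metric.cauchySeq_iff'.2 fun ε hε => ?_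
    obtain ⟨t₀, ht₀⟩ := eventually_atTop.1 (hf (ε / 3) (by positivity))
    refine ⟨t₀, fun t ht => ?_⟩
    obtain ⟨s, hs, hs₀⟩ := ((ht₀ t ht).and (ht₀ t₀ le_rfl)).exists
    rw [Real.dist_eq]
    calc |f x₀ t - f x₀ t₀| ≤ |f x₀ s - f x₀ t| + |f x₀ s - f x₀ t₀| := by
          rw [← abs_sub_comm (f x₀ t)]
          exact abs_sub_le _ _ _
      _ ≤ ε / 3 + ε / 3 := add_le_add (hs x₀ x₀) (hs₀ x₀ x₀)
      _ < ε := by linarith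
  obtain ⟨D, hD⟩ := cauchySeq_tendsto_of_complete hcauchy
  refine ⟨D, fun ε hε => ?_⟩
  filter_upwards [hf ε hε] with t ht x
  rw [abs_sub_comm]
  exact le_of_tendsto ((hD.sub_const _).abs) (ht.mono fun s hs => hs x₀ x)

section Counting

variable {d : ℕ} {A : Set (Fin d → ℝ)} {L : ℝ}

theorem IsDiscreteSet.finite_inter_Qc (hdisc : IsDiscreteSet A) (x : Fin d → ℝ) (T : ℝ) :
    (A ∩ Qc x T).Finite := by
  refine (hdisc x (|T| + 1)).subset (inter_subset_inter_right _ fun y hy => ?_)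
  rw [Metric.mem_ball, dist_pi_lt_iff (by positivity)]
  intro j
  rw [Real.dist_eq, abs_lt]
  have := hy j
  constructor <;> linarith [le_abs_self T]

theorem IsDiscreteSet.ncard_inter_Qc_mono (hdisc : IsDiscreteSet A) (x : Fin d → ℝ) {T T' : ℝ}
    (h : T ≤ T') : (A ∩ Qc x T).ncard ≤ (A ∩ Qc x T').ncard :=
  ncard_le_ncard
    (inter_subset_inter_right _ fun y hy j => ⟨(hy j).1, (hy j).2.trans_le (by linarith)⟩)
    (hdisc.finite_inter_Qc x T')

/-- The bijection of `RSI` for the shift `z - x + L` maps `A ∩ Qc x T` into `Qc z (T + 2L)`. -/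
theorem RSI.ncard_inter_Qc_le (hdisc : IsDiscreteSet A) (hA : RSI A L) (x z : Fin d → ℝ)
    (T : ℝ) :
    (A ∩ Qc x T).ncard ≤ (A ∩ Qc z (T + 2 * L)).ncard := by
  classical
  obtain ⟨σ, hσ⟩ := hA (z - x + fun _ => L)
  let f : (Fin d → ℝ) → (Fin d → ℝ) := fun a => if h : a ∈ A then σ ⟨a, h⟩ else a
  refine ncard_le_ncard_of_injOn f ?_ ?_ (hdisc.finite_inter_Qc z _)
  · rintro a ⟨haA, haQ⟩
    refine ⟨by simp [f, haA], fun j => ?_⟩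
    have hj := (norm_le_pi_norm _ j).trans_lt (hσ ⟨a, haA⟩)
    simp only [Pi.add_apply, Pi.sub_apply, Real.norm_eq_abs, abs_lt] at hj
    simp only [f, dif_pos haA]
    constructor <;> linarith [haQ j]
  · rintro a ⟨haA, -⟩ b ⟨hbA, -⟩ hab
    simp only [f, dif_pos haA, dif_pos hbA] at hab
    exact congrArg Subtype.val (σ.injective (Subtype.ext hab))

theorem mem_Qc_add_mul_iff {T : ℝ} (hT : 0 < T) (x a : Fin d → ℝ) (k : Fin d → ℤ) :
    a ∈ Qc (fun j => x j + T * k j) T ↔ ∀ j, ⌊(a j - x j) / T⌋ = k j := by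
  simp only [Qc, mem_ofPred_eq, Int.floor_eq_iff, le_div_iff₀ hT, div_lt_iff₀ hT]
  refine forall_congr' fun j => ?_
  constructor <;> rintro ⟨h₁, h₂⟩ <;> constructor <;> linarith

theorem mem_Qc_natCast_mul_iff {T : ℝ} (hT : 0 < T) (x a : Fin d → ℝ) (n : ℕ) :
    a ∈ Qc x (n * T) ↔ ∀ j, ⌊(a j - x j) / T⌋ ∈ Finset.Ico (0 : ℤ) n := by
  simp only [Qc, mem_ofPred_eq, Finset.mem_Ico, Int.floor_nonneg, Int.floor_lt, le_div_iff₀ hT,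
    div_lt_iff₀ hT, Int.cast_natCast]
  refine forall_congr' fun j => ?_
  constructor <;> rintro ⟨h₁, h₂⟩ <;> constructor <;> linarith

theorem IsDiscreteSet.ncard_inter_Qc_natCast_mul (hdisc : IsDiscreteSet A) {T : ℝ} (hT : 0 < T)
    (x : Fin d → ℝ) (n : ℕ) :
    (A ∩ Qc x (n * T)).ncard = ∑ k ∈ Fintype.piFinset fun _ => Finset.Ico (0 : ℤ) n,
      (A ∩ Qc (fun j => x j + T * k j) T).ncard := by
  classical
  rw [ncard_eq_toFinset_card _ (hdisc.finite_inter_Qc x _),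
    Finset.card_eq_sum_card_fiberwise (f := fun a j => ⌊(a j - x j) / T⌋)
      (t := Fintype.piFinset fun _ => Finset.Ico (0 : ℤ) n) fun a ha => by
      simpa [mem_Qc_natCast_mul_iff hT] using ((hdisc.finite_inter_Qc x _).mem_toFinset.1 ha).2]
  refine Finset.sum_congr rfl fun k hk => ?_
  rw [ncard_eq_toFinset_card _ (hdisc.finite_inter_Qc _ _)]
  congr 1
  ext a
  simp only [Finset.mem_filter, Finite.mem_toFinset, mem_inter_iff, mem_Qc_add_mul_iff hT,
    mem_Qc_natCast_mul_iff hT, funext_iff]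
  rw [Fintype.mem_piFinset] at hk
  constructor
  · rintro ⟨⟨haA, -⟩, hak⟩
    exact ⟨haA, hak⟩
  · rintro ⟨haA, hak⟩
    exact ⟨⟨haA, fun j => hak j ▸ hk j⟩, hak⟩

theorem ncard_inter_Qc_natCast_mul_le (hdisc : IsDiscreteSet A) (hA : RSI A L) {T : ℝ}
    (hT : 0 < T) (x z : Fin d → ℝ) (n : ℕ) :
    (A ∩ Qc x (n * T)).ncard ≤ n ^ d * (A ∩ Qc z (T + 2 * L)).ncard := by
  rw [hdisc.ncard_inter_Qc_natCast_mul hT]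
  refine (Finset.sum_le_card_nsmul _ _ _ fun k _ => hA.ncard_inter_Qc_le hdisc _ z T).trans ?_
  simp

theorem le_ncard_inter_Qc_natCast_mul (hdisc : IsDiscreteSet A) (hA : RSI A L) {T : ℝ}
    (hT : 0 < T) (x z : Fin d → ℝ) (n : ℕ) :
    n ^ d * (A ∩ Qc z (T - 2 * L)).ncard ≤ (A ∩ Qc x (n * T)).ncard := by
  rw [hdisc.ncard_inter_Qc_natCast_mul hT]
  refine le_trans ?_ (Finset.card_nsmul_le_sum _ _ _ fun k _ => by
    simpa using hA.ncard_inter_Qc_le hdisc z _ (T - 2 * L))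
  simp

theorem ncard_inter_Qc_le_mul (hdisc : IsDiscreteSet A) (hA : RSI A L) {S T : ℝ}
    (hT : 0 < T) (hS : 0 ≤ S) (x z : Fin d → ℝ) :
    ((A ∩ Qc x S).ncard : ℝ) ≤ ((S + T) / T) ^ d * (A ∩ Qc z (T + 2 * L)).ncard := by
  set n := ⌊S / T⌋₊ + 1
  have hSn : S ≤ n * T := by
    have := Nat.lt_floor_add_one (S / T)
    rw [div_lt_iff₀ hT] at this
    push_cast [n]
    linarith
  have hn : (n : ℝ) ≤ (S + T) / T := by
    rw [add_div, div_self hT.ne']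
    push_cast [n]
    gcongr
    exact Nat.floor_le (div_nonneg hS hT.le)
  calc ((A ∩ Qc x S).ncard : ℝ) ≤ (A ∩ Qc x (n * T)).ncard := by
        exact_mod_cast hdisc.ncard_inter_Qc_mono x hSn
    _ ≤ (n : ℝ) ^ d * (A ∩ Qc z (T + 2 * L)).ncard := by
        exact_mod_cast ncard_inter_Qc_natCast_mul_le hdisc hA hT x z n
    _ ≤ ((S + T) / T) ^ d * (A ∩ Qc z (T + 2 * L)).ncard := by gcongr

theorem le_ncard_inter_Qc_mul (hdisc : IsDiscreteSet A) (hA : RSI A L) {S T : ℝ}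
    (hT : 0 < T) (hTS : T ≤ S) (x z : Fin d → ℝ) :
    ((S - T) / T) ^ d * (A ∩ Qc z (T - 2 * L)).ncard ≤ ((A ∩ Qc x S).ncard : ℝ) := by
  set n := ⌊S / T⌋₊
  have hnS : n * T ≤ S := (le_div_iff₀ hT).1 (Nat.floor_le (div_nonneg (hT.le.trans hTS) hT.le))
  have hn : (S - T) / T ≤ n := by
    rw [sub_div, div_self hT.ne']
    exact (Nat.sub_one_lt_floor _).le
  calc ((S - T) / T) ^ d * (A ∩ Qc z (T - 2 * L)).ncard
      ≤ (n : ℝ) ^ d * (A ∩ Qc z (T - 2 * L)).ncard := by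
        have : 0 ≤ (S - T) / T := div_nonneg (sub_nonneg.2 hTS) hT.le
        gcongr
    _ ≤ (A ∩ Qc x (n * T)).ncard := by
        exact_mod_cast le_ncard_inter_Qc_natCast_mul hdisc hA hT x z n
    _ ≤ (A ∩ Qc x S).ncard := by
        exact_mod_cast hdisc.ncard_inter_Qc_mono x hnS

end Counting

noncomputable def cubeDensity {d : ℕ} (A : Set (Fin d → ℝ)) (x : Fin d → ℝ) (T : ℝ) : ℝ :=
  (A ∩ Qc x T).ncard / T ^ d

section Density

variable {d : ℕ} {A : Set (Fin d → ℝ)} {L : ℝ}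

theorem cubeDensity_nonneg (x : Fin d → ℝ) {T : ℝ} (hT : 0 ≤ T) : 0 ≤ cubeDensity A x T := by
  unfold cubeDensity
  positivity

theorem cubeDensity_le (hdisc : IsDiscreteSet A) (hA : RSI A L) {S T : ℝ} (hS : 0 < S)
    (hT : 0 < T) (hLT : 2 * L < T) (x z : Fin d → ℝ) :
    cubeDensity A x S ≤ ((S + (T - 2 * L)) / S * (T / (T - 2 * L))) ^ d * cubeDensity A z T := by
  have hT' : 0 < T - 2 * L := sub_pos.2 hLT
  have h := ncard_inter_Qc_le_mul hdisc hA hT' hS.le x z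
  rw [sub_add_cancel] at h
  unfold cubeDensity
  calc ((A ∩ Qc x S).ncard : ℝ) / S ^ d
      ≤ ((S + (T - 2 * L)) / (T - 2 * L)) ^ d * (A ∩ Qc z T).ncard / S ^ d := by gcongr
    _ = _ := by
        simp only [div_pow, mul_pow]
        field_simp

theorem le_cubeDensity (hdisc : IsDiscreteSet A) (hA : RSI A L) {S T : ℝ} (hT : 0 < T)
    (hLT : 0 < T + 2 * L) (hTS : T + 2 * L ≤ S) (x z : Fin d → ℝ) :
    ((S - (T + 2 * L)) / S * (T / (T + 2 * L))) ^ d * cubeDensity A z T ≤ cubeDensity A x S := by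
  have hS : 0 < S := hLT.trans_le hTS
  have h := le_ncard_inter_Qc_mul hdisc hA hLT hTS x z
  rw [add_sub_cancel_right] at h
  unfold cubeDensity
  calc ((S - (T + 2 * L)) / S * (T / (T + 2 * L))) ^ d * ((A ∩ Qc z T).ncard / T ^ d)
      = ((S - (T + 2 * L)) / (T + 2 * L)) ^ d * (A ∩ Qc z T).ncard / S ^ d := by
        simp only [div_pow, mul_pow]
        field_simp
    _ ≤ _ := by gcongr

theorem eventually_cubeDensity_le_mul (hdisc : IsDiscreteSet A) (hA : RSI A L) {δ : ℝ}
    (hδ : 0 < δ) : ∀ᶠ T in atTop, ∀ᶠ S in atTop, ∀ x y,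
      cubeDensity A x S ≤ (1 + δ) * cubeDensity A y T := by
  have hfactor := Filter.Tendsto.eventually_eventually (la := atTop) (p := (· < 1 + δ))
    (fun T => (((tendsto_add_div_self_atTop (T - 2 * L)).mul_const (T / (T - 2 * L))).pow d))
    (by simpa [sub_eq_add_neg] using (tendsto_div_add_self_atTop (-(2 * L))).pow d)
    (eventually_lt_nhds (by linarith))
  filter_upwards [hfactor, eventually_gt_atTop 0, eventually_gt_atTop (2 * L)]
    with T hT hT0 hLT
  filter_upwards [hT, eventually_gt_atTop 0] with S hS hS0 x y
  exact (cubeDensity_le hdisc hA hS0 hT0 hLT x y).trans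
    (mul_le_mul_of_nonneg_right hS.le (cubeDensity_nonneg y hT0.le))

theorem eventually_mul_le_cubeDensity (hdisc : IsDiscreteSet A) (hA : RSI A L) {δ : ℝ}
    (hδ : 0 < δ) : ∀ᶠ T in atTop, ∀ᶠ S in atTop, ∀ x y,
      (1 - δ) * cubeDensity A y T ≤ cubeDensity A x S := by
  have hfactor := Filter.Tendsto.eventually_eventually (la := atTop) (p := (1 - δ < ·))
    (fun T =>
      (((tendsto_add_div_self_atTop (-(T + 2 * L))).mul_const (T / (T + 2 * L))).pow d))
    (by simpa using (tendsto_div_add_self_atTop (2 * L)).pow d)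
    (eventually_gt_nhds (by linarith))
  filter_upwards [hfactor, eventually_gt_atTop 0, eventually_gt_atTop (-(2 * L))]
    with T hT hT0 hLT
  filter_upwards [hT, eventually_ge_atTop (T + 2 * L)] with S hS hTS x y
  refine le_trans ?_ (le_cubeDensity hdisc hA hT0 (by linarith) hTS x y)
  rw [← sub_eq_add_neg] at hS
  exact mul_le_mul_of_nonneg_right hS.le (cubeDensity_nonneg y hT0.le)

theorem exists_eventually_cubeDensity_le (hdisc : IsDiscreteSet A) (hA : RSI A L) :
    ∃ B, ∀ᶠ T in atTop, ∀ x, cubeDensity A x T ≤ B := by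
  obtain ⟨T, hT⟩ := (eventually_cubeDensity_le_mul hdisc hA one_pos).exists
  exact ⟨(1 + 1) * cubeDensity A 0 T, hT.mono fun S hS x => hS x 0⟩

theorem eventually_abs_cubeDensity_sub_le (hdisc : IsDiscreteSet A) (hA : RSI A L) {ε : ℝ}
    (hε : 0 < ε) : ∀ᶠ T in atTop, ∀ᶠ S in atTop, ∀ x y,
      |cubeDensity A x S - cubeDensity A y T| ≤ ε := by
  obtain ⟨B, hB⟩ := exists_eventually_cubeDensity_le hdisc hA
  set δ := ε / (|B| + 1)
  have hδ : 0 < δ := by positivity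
  have hδB : δ * B ≤ ε := by
    calc δ * B ≤ δ * (|B| + 1) := by gcongr; linarith [le_abs_self B]
      _ = ε := div_mul_cancel₀ ε (by positivity)
  filter_upwards [eventually_cubeDensity_le_mul hdisc hA hδ,
    eventually_mul_le_cubeDensity hdisc hA hδ, hB] with T hle hge hTB
  filter_upwards [hle, hge] with S hle hge x y
  have hδy : δ * cubeDensity A y T ≤ ε :=
    (mul_le_mul_of_nonneg_left (hTB y) hδ.le).trans hδB
  rw [abs_sub_le_iff]
  constructor <;> linarith [hle x y, hge x y]

theorem RSI.one_le_ncard_inter_Qc (hdisc : IsDiscreteSet A) (hA : RSI A L) (hne : A.Nonempty)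
    (z : Fin d → ℝ) {T : ℝ} (hT : 2 * L < T) : 1 ≤ (A ∩ Qc z T).ncard := by
  obtain ⟨a, ha⟩ := hne
  have hmem : a ∈ A ∩ Qc a (T - 2 * L) := ⟨ha, fun j => ⟨le_rfl, by linarith⟩⟩
  calc 1 ≤ (A ∩ Qc a (T - 2 * L)).ncard :=
        Nat.one_le_iff_ne_zero.2 ((ncard_pos (hdisc.finite_inter_Qc a _)).2 ⟨a, hmem⟩).ne'
    _ ≤ (A ∩ Qc z T).ncard := by simpa using hA.ncard_inter_Qc_le hdisc a z (T - 2 * L)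

theorem exists_pos_eventually_le_cubeDensity (hdisc : IsDiscreteSet A) (hA : RSI A L)
    (hne : A.Nonempty) : ∃ c > 0, ∀ᶠ T in atTop, ∀ x, c ≤ cubeDensity A x T := by
  obtain ⟨T, hT, hLT, hT0⟩ := ((eventually_mul_le_cubeDensity hdisc hA one_half_pos).and
    ((eventually_gt_atTop (2 * L)).and (eventually_gt_atTop 0))).exists
  refine ⟨(1 - 1 / 2) * cubeDensity A 0 T, ?_, hT.mono fun S hS x => hS x 0⟩
  have hN : (0 : ℝ) < (A ∩ Qc 0 T).ncard :=
    Nat.cast_pos.2 (hA.one_le_ncard_inter_Qc hdisc hne 0 hLT)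
  unfold cubeDensity
  positivity

end Density

theorem stmt5 {d : ℕ} (A : Set (Fin d → ℝ)) (L : ℝ)
    (hdisc : IsDiscreteSet A) (hA : RSI A L) (hne : A.Nonempty) :
    ∃ D : ℝ, 0 < D ∧
      ∀ ε > (0 : ℝ), ∃ T₀ : ℝ, ∀ T : ℝ, T₀ ≤ T → ∀ x : Fin d → ℝ,
        |((A ∩ Qc x T).ncard : ℝ) / T ^ d - D| < ε := by
  obtain ⟨D, hD⟩ := exists_forall_eventually_abs_sub_le fun ε hε =>
    eventually_abs_cubeDensity_sub_le hdisc hA hε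
  obtain ⟨c, hc, hcT⟩ := exists_pos_eventually_le_cubeDensity hdisc hA hne
  have hD_pos : 0 < D := by
    obtain ⟨T, hT, hcT⟩ := ((hD (c / 2) (half_pos hc)).and hcT).exists
    linarith [(abs_sub_le_iff.1 (hT 0)).1, hcT 0]
  refine ⟨D, hD_pos, fun ε hε => ?_⟩
  obtain ⟨T₀, hT₀⟩ := eventually_atTop.1 (hD (ε / 2) (half_pos hε))
  exact ⟨T₀, fun T hT x => (hT₀ T hT x).trans_lt (half_lt_self hε)⟩
end

section
/- Let Γ = (V,E) be a directed graph with countably many vertices, finite degree at each vertex, and such that for each edge e the reversed edge −e is also in E. Let (R_v)_{v∈V} be integers. Suppose there exist real numbers p_e (e ∈ E) with p_e = −p_{−e} for every e, and Σ_{e ∈ E_v} p_e = R_v for every v, where E_v is the set of edges starting at v. Then there exist integers t_e ∈ {⌊p_e⌋, ⌊p_e⌋ + 1} such that t_e = −t_{−e} for every e ∈ E and Σ_{e ∈ E_v} t_e = R_v for every v ∈ V. -/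
/-!
Call an edge loose for `q` if `q e` lies strictly between `⌊p e⌋` and `⌈p e⌉`. As the sum at a
vertex is an integer, no vertex has exactly one loose edge. Hence, if the vertex sums are only
imposed on a finite set `W`, the loose edges touching `W` contain a nonempty trail that is closed
or has both ends outside `W`. Its signed indicator has zero divergence on `W`, so `q` can be pushed
along it until one of its edges reaches a bound. Iterating makes every edge at `W` integral, and
compactness of the box `∏ₑ [⌊p e⌋, ⌈p e⌉]` glues these finite solutions into a global one.
-/

namespace SimpleGraph

variable {V : Type*} {G : SimpleGraph V}

theorem Walk.IsPath.length_lt_card {S : Finset V} (hS : ∀ v w, G.Adj v w → v ∈ S) {u v : V}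
    {P : G.Walk u v} (hP : P.IsPath) (hnil : ¬P.Nil) : P.length < S.card := by
  classical
  have hsub : P.support.toFinset ⊆ S := by
    intro x hx
    obtain ⟨e, he, hxe⟩ :=
      (Walk.mem_support_iff_exists_mem_edges_of_not_nil hnil).1 (List.mem_toFinset.1 hx)
    obtain ⟨y, rfl⟩ := Sym2.mem_iff_exists.1 hxe
    exact hS x y (P.adj_of_mem_edges he)
  have := Finset.card_le_card hsub
  rw [List.toFinset_card_of_nodup hP.support_nodup, Walk.length_support] at this
  omega

theorem exists_isPath_forall_length_le {S : Finset V} (hS : ∀ v w, G.Adj v w → v ∈ S)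
    {a b : V} (hab : G.Adj a b) :
    ∃ (x y : V) (P : G.Walk x y), P.IsPath ∧ ¬P.Nil ∧
      ∀ (x' y' : V) (Q : G.Walk x' y'), Q.IsPath → Q.length ≤ P.length := by
  set lengths : Set ℕ := {n | ∃ (x y : V) (Q : G.Walk x y), Q.IsPath ∧ Q.length = n}
  have hbdd : BddAbove lengths := by
    refine ⟨S.card, ?_⟩
    rintro _ ⟨x, y, Q, hQ, rfl⟩
    by_cases hnil : Q.Nil
    · simp [hnil.length_eq_zero]
    · exact (hQ.length_lt_card hS hnil).le
  have hedge : 1 ∈ lengths := ⟨a, b, hab.toWalk, by simp [hab.ne], rfl⟩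
  obtain ⟨x, y, P, hP, hlen⟩ := Nat.sSup_mem ⟨1, hedge⟩ hbdd
  refine ⟨x, y, P, hP, ?_, fun x' y' Q hQ => hlen ▸ le_csSup hbdd ⟨x', y', Q, hQ, rfl⟩⟩
  rw [← Walk.length_eq_zero_iff, hlen]
  exact (le_csSup hbdd hedge).trans_lt' one_pos |>.ne'

theorem Walk.IsPath.exists_isTrail_closed {x y : V} {P : G.Walk x y} (hP : P.IsPath)
    (hnil : ¬P.Nil) (hmax : ∀ (x' y' : V) (Q : G.Walk x' y'), Q.IsPath → Q.length ≤ P.length)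
    (hx : ∀ u, G.Adj x u → ∃ w ≠ u, G.Adj x w) :
    ∃ (z : V) (C : G.Walk z z), C.IsTrail ∧ ¬C.Nil := by
  classical
  cases P with
  | nil => exact absurd Walk.Nil.nil hnil
  | @cons _ u _ hxu Q =>
    obtain ⟨w, hwu, hxw⟩ := hx u hxu
    have hQ := (Walk.cons_isPath_iff hxu Q).1 hP
    have hwQ : w ∈ Q.support := by
      by_contra hwQ
      have hwP : w ∉ (Walk.cons hxu Q).support := by
        simp [hwQ, hxw.ne.symm]
      have := hmax _ _ _ ((Walk.cons_isPath_iff hxw.symm _).2 ⟨hP, hwP⟩)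
      simp at this
    set Q' := Q.takeUntil w hwQ
    have hxQ' : x ∉ Q'.support := fun h => hQ.2 (Q.support_takeUntil_subset_support hwQ h)
    refine ⟨w, .cons hxw.symm (.cons hxu Q'), ?_, Walk.not_nil_cons⟩
    simp only [Walk.isTrail_cons, Walk.edges_cons, List.mem_cons, Sym2.eq_swap (a := w),
      Sym2.congr_right, not_or]
    exact ⟨⟨(hQ.1.takeUntil hwQ).isTrail, fun h => hxQ' (Q'.fst_mem_support_of_mem_edges h)⟩,
      hwu, fun h => hxQ' (Q'.fst_mem_support_of_mem_edges h)⟩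

theorem exists_isTrail_closed_or_ends_not_mem {S : Finset V} (hS : ∀ v w, G.Adj v w → v ∈ S)
    {a b : V} (hab : G.Adj a b) (W : Set V) (hW : ∀ v ∈ W, ∀ u, G.Adj v u → ∃ w ≠ u, G.Adj v w) :
    ∃ (x y : V) (P : G.Walk x y), P.IsTrail ∧ ¬P.Nil ∧ (x = y ∨ x ∉ W ∧ y ∉ W) := by
  obtain ⟨x, y, P, hP, hnil, hmax⟩ := exists_isPath_forall_length_le hS hab
  by_cases hx : x ∈ W
  · obtain ⟨z, C, hC, hCnil⟩ := hP.exists_isTrail_closed hnil hmax (hW x hx)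
    exact ⟨z, z, C, hC, hCnil, .inl rfl⟩
  by_cases hy : y ∈ W
  · obtain ⟨z, C, hC, hCnil⟩ := hP.reverse.exists_isTrail_closed (by simpa using hnil)
      (by simpa using hmax) (hW y hy)
    exact ⟨z, z, C, hC, hCnil, .inl rfl⟩
  exact ⟨x, y, P, hP.isTrail, hnil, .inr ⟨hx, hy⟩⟩

variable [DecidableEq V]

def Walk.flow {u v : V} : G.Walk u v → V × V → ℤ
  | nil, _ => 0
  | cons (v := w) _ P, e => (if e = (u, w) then 1 else 0) - (if e = (w, u) then 1 else 0) + P.flow e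

theorem Walk.flow_swap {u v : V} (P : G.Walk u v) (e : V × V) : P.flow e.swap = -P.flow e := by
  induction P with
  | nil => simp [flow]
  | cons h P ih =>
    simp only [flow, ih, Prod.swap_eq_iff_eq_swap, Prod.swap_prod_mk]
    ring

theorem Walk.flow_eq_zero {u v a b : V} (P : G.Walk u v) (hab : s(a, b) ∉ P.edges) :
    P.flow (a, b) = 0 := by
  induction P with
  | nil => rfl
  | cons h P ih =>
    simp only [edges_cons, List.mem_cons, not_or, Sym2.eq_iff] at hab
    simp only [flow, ih hab.2, Prod.mk.injEq]
    grind

theorem Walk.adj_of_flow_ne_zero {u v a b : V} (P : G.Walk u v) (hab : P.flow (a, b) ≠ 0) :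
    G.Adj a b := by
  by_contra h
  exact hab (P.flow_eq_zero fun he => h (P.adj_of_mem_edges he))

theorem Walk.IsTrail.exists_flow_ne_zero {u v : V} {P : G.Walk u v} (hP : P.IsTrail)
    (hnil : ¬P.Nil) : ∃ e, P.flow e ≠ 0 := by
  cases P with
  | nil => exact absurd Walk.Nil.nil hnil
  | @cons _ w _ h Q =>
    refine ⟨(u, w), ?_⟩
    rw [isTrail_cons] at hP
    simp [flow, Q.flow_eq_zero hP.2, h.ne]

theorem Walk.sum_flow {u v : V} (P : G.Walk u v) {x : V} {s : Finset V}
    (hs : ∀ w, G.Adj x w → w ∈ s) :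
    ∑ w ∈ s, P.flow (x, w) = (if u = x then 1 else 0) - (if v = x then 1 else 0) := by
  induction P with
  | nil => simp [flow]
  | @cons u w v h P ih =>
    simp only [flow, Finset.sum_add_distrib, Finset.sum_sub_distrib, ih, Prod.mk.injEq, ite_and,
      Finset.sum_ite_irrel, Finset.sum_ite_eq', Finset.sum_const_zero]
    have hws : x = u → w ∈ s := fun hxu => hs w (hxu ▸ h)
    have hus : x = w → u ∈ s := fun hxw => hs u (hxw ▸ h.symm)
    split_ifs <;> grind

end SimpleGraph

open Set

theorem exists_int_eq_of_mem_Icc_floor_ceil {x y : ℝ} (hx : x ∈ Icc (⌊y⌋ : ℝ) ⌈y⌉)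
    (hx' : x ∉ Ioo (⌊y⌋ : ℝ) ⌈y⌉) : ∃ n : ℤ, x = n ∧ (n = ⌊y⌋ ∨ n = ⌊y⌋ + 1) := by
  have hceil : ⌈y⌉ = ⌊y⌋ ∨ ⌈y⌉ = ⌊y⌋ + 1 := by
    have := Int.ceil_le_floor_add_one y
    have := Int.floor_le_ceil y
    omega
  rw [Set.mem_Ioo, not_and_or, not_lt, not_lt] at hx'
  rcases hx' with h | h
  · exact ⟨⌊y⌋, le_antisymm h hx.1, .inl rfl⟩
  · exact ⟨⌈y⌉, le_antisymm hx.2 h, hceil⟩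

theorem intCast_notMem_Ioo_floor_ceil (n : ℤ) (y : ℝ) : (n : ℝ) ∉ Ioo (⌊y⌋ : ℝ) ⌈y⌉ := by
  rintro ⟨h₁, h₂⟩
  have := Int.ceil_le_floor_add_one y
  norm_cast at h₁ h₂
  omega

namespace IntegralRounding

variable {V : Type*} (N : V → Finset V) (p : V × V → ℝ) (R : V → ℤ)

def box : Set (V × V → ℝ) := univ.pi fun e => Icc (⌊p e⌋ : ℝ) ⌈p e⌉

def IsLoose (q : V × V → ℝ) (e : V × V) : Prop := q e ∈ Ioo (⌊p e⌋ : ℝ) ⌈p e⌉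

structure IsFractional (W : Set V) (q : V × V → ℝ) : Prop where
  mem_box : q ∈ box p
  antisymm : ∀ v, ∀ w ∈ N v, q (v, w) = -q (w, v)
  sum_eq : ∀ v ∈ W, ∑ w ∈ N v, q (v, w) = R v

variable {N p R}

theorem isLoose_swap (hp : ∀ v, ∀ w ∈ N v, p (v, w) = -p (w, v)) {q : V × V → ℝ}
    (hq : ∀ v, ∀ w ∈ N v, q (v, w) = -q (w, v)) {v w : V} (hw : w ∈ N v) :
    IsLoose p q (w, v) ↔ IsLoose p q (v, w) := by
  simp only [IsLoose, hp v w hw, hq v w hw, Int.floor_neg, Int.ceil_neg, Int.cast_neg,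
    Set.mem_Ioo, neg_lt_neg_iff, and_comm]

theorem not_isLoose_self (hp : ∀ v, ∀ w ∈ N v, p (v, w) = -p (w, v)) {q : V × V → ℝ} {v : V}
    (hv : v ∈ N v) : ¬IsLoose p q (v, v) := by
  have : p (v, v) = 0 := by linarith [hp v v hv]
  simp [IsLoose, this]

theorem IsFractional.exists_isLoose_ne {W : Finset V} {q : V × V → ℝ}
    (hq : IsFractional N p R W q) {v u : V} (hv : v ∈ W) (hu : u ∈ N v)
    (hvu : IsLoose p q (v, u)) : ∃ w ∈ N v, w ≠ u ∧ IsLoose p q (v, w) := by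
  classical
  by_contra! htight
  have hint : ∀ w ∈ N v, w ≠ u → q (v, w) ∈ (Int.castAddHom ℝ).range := fun w hw hwu => by
    obtain ⟨n, hn, -⟩ := exists_int_eq_of_mem_Icc_floor_ceil (hq.mem_box _ trivial)
      (htight w hw hwu)
    exact ⟨n, by simp [hn]⟩
  have hsplit := Finset.add_sum_erase (N v) (fun w => q (v, w)) hu
  rw [hq.sum_eq v hv] at hsplit
  have : q (v, u) ∈ (Int.castAddHom ℝ).range := by
    rw [eq_sub_of_add_eq hsplit]
    refine sub_mem ⟨R v, by simp⟩ (sum_mem fun w hw => ?_)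
    exact hint w (Finset.mem_of_mem_erase hw) (Finset.ne_of_mem_erase hw)
  obtain ⟨n, hn⟩ := this
  rw [IsLoose, ← hn] at hvu
  exact intCast_notMem_Ioo_floor_ceil n _ hvu

theorem exists_add_mul_mem_box_not_isLoose (hp : ∀ v, ∀ w ∈ N v, p (v, w) = -p (w, v))
    {q c : V × V → ℝ} (hq : q ∈ box p) (hqa : ∀ v, ∀ w ∈ N v, q (v, w) = -q (w, v))
    (hc : ∀ e, c e.swap = -c e) {T : Finset (V × V)} (hcT : ∀ e, c e ≠ 0 → e ∈ T)
    (hT : ∀ e ∈ T, e.2 ∈ N e.1 ∧ IsLoose p q e) (hc0 : ∃ e, c e ≠ 0) :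
    ∃ ε : ℝ, (fun e => q e + ε * c e) ∈ box p ∧ ∃ e ∈ T, ¬IsLoose p (fun e => q e + ε * c e) e := by
  classical
  -- the step is the largest one keeping every edge with `c e > 0` below its ceiling; by
  -- antisymmetry this also keeps every edge with `c e < 0` above its floor
  set room : V × V → ℝ := fun e => (⌈p e⌉ - q e) / c e
  have hpos : (T.filter fun e => 0 < c e).Nonempty := by
    obtain ⟨e, he⟩ := hc0
    rcases he.lt_or_gt with hneg | hpos
    · have : c e.swap ≠ 0 := by rw [hc]; exact neg_ne_zero.2 he
      exact ⟨e.swap, Finset.mem_filter.2 ⟨hcT _ this, by rw [hc]; linarith⟩⟩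
    · exact ⟨e, Finset.mem_filter.2 ⟨hcT e he, hpos⟩⟩
  obtain ⟨e₀, he₀, hmin⟩ := Finset.exists_min_image _ room hpos
  obtain ⟨he₀T, hce₀⟩ := Finset.mem_filter.1 he₀
  have hε : 0 ≤ room e₀ := div_nonneg (sub_nonneg.2 (hT e₀ he₀T).2.2.le) hce₀.le
  have hup : ∀ e ∈ T, 0 < c e → q e + room e₀ * c e ≤ ⌈p e⌉ := fun e he hce => by
    have := hmin e (Finset.mem_filter.2 ⟨he, hce⟩)
    rw [le_div_iff₀ hce] at this
    linarith
  refine ⟨room e₀, fun e _ => ?_, e₀, he₀T, fun hl => ?_⟩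
  · have hqe := hq e trivial
    rcases lt_trichotomy (c e) 0 with hce | hce | hce
    · obtain ⟨heN, -⟩ := hT e (hcT e hce.ne)
      have hsw := hup e.swap (hcT _ (by rw [hc]; linarith)) (by rw [hc]; linarith)
      obtain ⟨a, b⟩ := e
      have hpe : p (b, a) = -p (a, b) := by linarith [hp a b heN]
      have hqe' : q (b, a) = -q (a, b) := by linarith [hqa a b heN]
      rw [hc, Prod.swap_prod_mk, hpe, hqe', Int.ceil_neg, Int.cast_neg] at hsw
      exact ⟨by linarith, by nlinarith [hqe.2]⟩
    · simpa [hce] using hqe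
    · exact ⟨by nlinarith [hqe.1], hup e (hcT e hce.ne') hce⟩
  · have : q e₀ + room e₀ * c e₀ = ⌈p e₀⌉ := by
      simp only [room]
      field_simp
      ring
    exact (lt_irrefl _) (this ▸ hl.2)

variable (N p) in
open Classical in
noncomputable def looseEdges (W : Finset V) (q : V × V → ℝ) : Finset (V × V) :=
  ((W ∪ W.biUnion N) ×ˢ (W ∪ W.biUnion N)).filter
    fun e => e.2 ∈ N e.1 ∧ (e.1 ∈ W ∨ e.2 ∈ W) ∧ IsLoose p q e

theorem mem_looseEdges (hN : ∀ v, ∀ w ∈ N v, v ∈ N w) {W : Finset V} {q : V × V → ℝ}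
    {e : V × V} :
    e ∈ looseEdges N p W q ↔ e.2 ∈ N e.1 ∧ (e.1 ∈ W ∨ e.2 ∈ W) ∧ IsLoose p q e := by
  classical
  simp only [looseEdges, Finset.mem_filter, Finset.mem_product, Finset.mem_union,
    Finset.mem_biUnion, and_iff_right_iff_imp]
  rintro ⟨he, hW | hW, -⟩
  · exact ⟨.inl hW, .inr ⟨e.1, hW, he⟩⟩
  · exact ⟨.inr ⟨e.2, hW, hN _ _ he⟩, .inl hW⟩

variable [DecidableEq V]

theorem IsFractional.exists_looseEdges_ssubset (hN : ∀ v, ∀ w ∈ N v, v ∈ N w)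
    (hp : ∀ v, ∀ w ∈ N v, p (v, w) = -p (w, v)) {W : Finset V} {q : V × V → ℝ}
    (hq : IsFractional N p R W q) (hne : (looseEdges N p W q).Nonempty) :
    ∃ q', IsFractional N p R W q' ∧ looseEdges N p W q' ⊂ looseEdges N p W q := by
  set L := looseEdges N p W q
  set G := SimpleGraph.fromRel fun v w => (v, w) ∈ L
  have hadj : ∀ v w, G.Adj v w ↔ (v, w) ∈ L := fun v w => by
    simp only [G, SimpleGraph.fromRel_adj, L, mem_looseEdges hN]
    constructor
    · rintro ⟨-, h | ⟨hvw, hW, hl⟩⟩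
      · exact h
      · exact ⟨hN _ _ hvw, hW.symm, (isLoose_swap hp hq.antisymm hvw).2 hl⟩
    · rintro ⟨hvw, hW, hl⟩
      refine ⟨fun h => ?_, .inl ⟨hvw, hW, hl⟩⟩
      subst h
      exact not_isLoose_self hp hvw hl
  obtain ⟨⟨a, b⟩, hab⟩ := hne
  obtain ⟨x, y, P, hP, hPnil, hxy⟩ :=
    G.exists_isTrail_closed_or_ends_not_mem (S := L.image Prod.fst)
      (fun v w h => Finset.mem_image.2 ⟨_, (hadj v w).1 h, rfl⟩) ((hadj a b).2 hab) W
      fun v hv u hvu => by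
        obtain ⟨hu, -, hl⟩ := mem_looseEdges hN |>.1 ((hadj v u).1 hvu)
        obtain ⟨w, hw, hwu, hlw⟩ := hq.exists_isLoose_ne hv hu hl
        exact ⟨w, hwu, (hadj v w).2 (mem_looseEdges hN |>.2 ⟨hw, .inl hv, hlw⟩)⟩
  set c : V × V → ℝ := fun e => P.flow e
  have hcL : ∀ e, c e ≠ 0 → e ∈ L := fun e he =>
    (hadj e.1 e.2).1 (P.adj_of_flow_ne_zero (by simpa [c] using he))
  obtain ⟨ε, hbox, e₀, he₀, htight⟩ := exists_add_mul_mem_box_not_isLoose hp hq.mem_box hq.antisymm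
    (c := c) (fun e => by simp [c, P.flow_swap]) hcL
    (fun e he => ((mem_looseEdges hN).1 he).imp_right And.right)
    (by obtain ⟨e, he⟩ := hP.exists_flow_ne_zero hPnil; exact ⟨e, by simpa [c] using he⟩)
  refine ⟨_, ⟨hbox, fun v w hw => ?_, fun v hv => ?_⟩, ?_⟩
  · have hflow := P.flow_swap (w, v)
    rw [Prod.swap_prod_mk] at hflow
    simp only [hq.antisymm v w hw, c, hflow]
    push_cast
    ring
  · simp only [Finset.sum_add_distrib, ← Finset.mul_sum, hq.sum_eq v hv, c]
    rw [← Int.cast_sum, P.sum_flow (fun w h => ((mem_looseEdges hN).1 ((hadj v w).1 h)).1)]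
    rcases hxy with rfl | ⟨hx, hy⟩
    · simp
    · simp [show x ≠ v by rintro rfl; exact hx hv, show y ≠ v by rintro rfl; exact hy hv]
  · refine (Finset.ssubset_iff_of_subset fun e he => ?_).2 ⟨e₀, he₀, fun h => htight ?_⟩
    · by_cases hce : c e = 0
      · rw [mem_looseEdges hN] at he ⊢
        simpa [IsLoose, hce] using he
      · exact hcL e hce
    · exact ((mem_looseEdges hN).1 h).2.2

theorem IsFractional.exists_forall_not_isLoose (hN : ∀ v, ∀ w ∈ N v, v ∈ N w)
    (hp : ∀ v, ∀ w ∈ N v, p (v, w) = -p (w, v)) {W : Finset V} {q : V × V → ℝ}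
    (hq : IsFractional N p R W q) :
    ∃ q', IsFractional N p R W q' ∧ ∀ v ∈ W, ∀ w ∈ N v, ¬IsLoose p q' (v, w) := by
  induction hL : looseEdges N p W q using Finset.strongInduction generalizing q with
  | H L ih =>
    by_cases hne : L.Nonempty
    · obtain ⟨q', hq', hlt⟩ := hq.exists_looseEdges_ssubset hN hp (hL ▸ hne)
      exact ih _ (hL ▸ hlt) hq' rfl
    · refine ⟨q, hq, fun v hv w hw hl => hne ⟨(v, w), ?_⟩⟩
      rw [← hL, mem_looseEdges hN]
      exact ⟨hw, .inl hv, hl⟩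

theorem exists_forall_not_isLoose (hN : ∀ v, ∀ w ∈ N v, v ∈ N w)
    (hp : ∀ v, ∀ w ∈ N v, p (v, w) = -p (w, v)) (hsum : ∀ v, ∑ w ∈ N v, p (v, w) = R v) :
    ∃ q, IsFractional N p R univ q ∧ ∀ v, ∀ w ∈ N v, ¬IsLoose p q (v, w) := by
  set Z : V → Set (V × V → ℝ) := fun v => {q | (∀ w ∈ N v, q (v, w) = -q (w, v)) ∧
    ∑ w ∈ N v, q (v, w) = R v ∧ ∀ w ∈ N v, ¬IsLoose p q (v, w)}
  have hZ : ∀ v, IsClosed (Z v) := fun v => by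
    simp only [Z, IsLoose, ofPred_and, ofPred_forall]
    refine .inter (isClosed_biInter fun w _ => isClosed_eq (by fun_prop) (by fun_prop))
      (.inter (isClosed_eq (by fun_prop) (by fun_prop)) (isClosed_biInter fun w _ => ?_))
    exact (isOpen_Ioo.preimage (continuous_apply (v, w))).isClosed_compl
  have hp_mem : p ∈ box p := fun e _ => ⟨Int.floor_le _, Int.le_ceil _⟩
  obtain ⟨q, hqbox, hqZ⟩ := (isCompact_univ_pi fun e => isCompact_Icc).inter_iInter_nonempty Z hZ
    fun W => by
      obtain ⟨q, hq, htight⟩ := IsFractional.exists_forall_not_isLoose hN hp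
        (⟨hp_mem, hp, fun v _ => hsum v⟩ : IsFractional N p R (W : Set V) p)
      exact ⟨q, hq.mem_box, mem_iInter₂.2 fun v hv => ⟨hq.antisymm v, hq.sum_eq v hv, htight v hv⟩⟩
  rw [mem_iInter] at hqZ
  exact ⟨q, ⟨hqbox, fun v => (hqZ v).1, fun v _ => (hqZ v).2.1⟩, fun v => (hqZ v).2.2⟩

theorem exists_int_rounding (hN : ∀ v, ∀ w ∈ N v, v ∈ N w)
    (hp : ∀ v, ∀ w ∈ N v, p (v, w) = -p (w, v)) (hsum : ∀ v, ∑ w ∈ N v, p (v, w) = R v) :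
    ∃ t : V × V → ℤ, (∀ v, ∀ w ∈ N v, t (v, w) = ⌊p (v, w)⌋ ∨ t (v, w) = ⌊p (v, w)⌋ + 1) ∧
      (∀ v, ∀ w ∈ N v, t (v, w) = -t (w, v)) ∧ ∀ v, ∑ w ∈ N v, t (v, w) = R v := by
  obtain ⟨q, hq, htight⟩ := exists_forall_not_isLoose hN hp hsum
  have hint : ∀ v, ∀ w ∈ N v, ((⌊q (v, w)⌋ : ℤ) : ℝ) = q (v, w) ∧
      (⌊q (v, w)⌋ = ⌊p (v, w)⌋ ∨ ⌊q (v, w)⌋ = ⌊p (v, w)⌋ + 1) := fun v w hw => by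
    obtain ⟨n, hn, hround⟩ := exists_int_eq_of_mem_Icc_floor_ceil (hq.mem_box _ trivial)
      (htight v w hw)
    simpa [hn] using hround
  refine ⟨fun e => ⌊q e⌋, fun v w hw => (hint v w hw).2, fun v w hw => ?_, fun v => ?_⟩
  · have := hq.antisymm v w hw
    rw [← (hint v w hw).1, ← (hint w v (hN v w hw)).1] at this
    exact_mod_cast this
  · have := hq.sum_eq v trivial
    rw [← Finset.sum_congr rfl fun w hw => (hint v w hw).1] at this
    exact_mod_cast this

end IntegralRounding

theorem stmt10_general {V : Type*} (E : Set (V × V))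
    (hsym : ∀ e ∈ E, Prod.swap e ∈ E)
    (hfin : ∀ v : V, {w | (v, w) ∈ E}.Finite)
    (R : V → ℤ) (p : V × V → ℝ)
    (hp : ∀ e ∈ E, p e = - p (Prod.swap e))
    (hsum : ∀ v : V, ∑ w ∈ (hfin v).toFinset, p (v, w) = (R v : ℝ)) :
    ∃ t : V × V → ℤ,
      (∀ e ∈ E, t e = ⌊p e⌋ ∨ t e = ⌊p e⌋ + 1) ∧
      (∀ e ∈ E, t e = - t (Prod.swap e)) ∧
      (∀ v : V, ∑ w ∈ (hfin v).toFinset, t (v, w) = R v) := by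
  classical
  have hmem : ∀ v w, w ∈ (hfin v).toFinset ↔ (v, w) ∈ E := fun v w => Set.Finite.mem_toFinset _
  obtain ⟨t, hround, hanti, hsumt⟩ := IntegralRounding.exists_int_rounding
    (N := fun v => (hfin v).toFinset) (fun v w hw => (hmem w v).2 (hsym _ ((hmem v w).1 hw)))
    (fun v w hw => hp _ ((hmem v w).1 hw)) hsum
  exact ⟨t, fun ⟨v, w⟩ he => hround v w ((hmem v w).2 he),
    fun ⟨v, w⟩ he => hanti v w ((hmem v w).2 he), hsumt⟩

theorem stmt10 {V : Type*} [Countable V] (E : Set (V × V))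
    (hsym : ∀ e ∈ E, Prod.swap e ∈ E)
    (hfin : ∀ v : V, {w | (v, w) ∈ E}.Finite)
    (R : V → ℤ) (p : V × V → ℝ)
    (hp : ∀ e ∈ E, p e = - p (Prod.swap e))
    (hsum : ∀ v : V, ∑ w ∈ (hfin v).toFinset, p (v, w) = (R v : ℝ)) :
    ∃ t : V × V → ℤ,
      (∀ e ∈ E, t e = ⌊p e⌋ ∨ t e = ⌊p e⌋ + 1) ∧
      (∀ e ∈ E, t e = - t (Prod.swap e)) ∧
      (∀ v : V, ∑ w ∈ (hfin v).toFinset, t (v, w) = R v) :=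
  stmt10_general E hsym hfin R p hp hsum
end

section
/- Every almost periodic discrete multiset A = {a_n}_{n∈ℕ} ⊆ ℝ^d is roughly shift-invariant: there exists L < ∞ such that for every x ∈ ℝ^d there is a bijection σ_x : ℕ → ℕ with sup_n |a_n + x − a_{σ_x(n)}| < L. -/
open Set

theorem stmt15 {d : ℕ} (a : ℕ → EuclideanSpace ℝ (Fin d))
    (hdisc : ∀ (x : EuclideanSpace ℝ (Fin d)) (r : ℝ), {n : ℕ | a n ∈ Metric.ball x r}.Finite)
    (hap : ∀ ε > (0 : ℝ), ∃ R : ℝ, ∀ x : EuclideanSpace ℝ (Fin d),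
      ∃ y : EuclideanSpace ℝ (Fin d), dist x y < R ∧
        ∃ σ : ℕ ≃ ℕ, ∀ n : ℕ, ‖a n + y - a (σ n)‖ < ε) :
    ∃ L : ℝ, ∀ x : EuclideanSpace ℝ (Fin d),
      ∃ σ : ℕ ≃ ℕ, ∀ n : ℕ, ‖a n + x - a (σ n)‖ < L := by
  obtain ⟨R, hR⟩ := hap 1 one_pos
  refine ⟨R + 1, fun x => ?_⟩
  obtain ⟨y, hy, σ, hσ⟩ := hR x
  refine ⟨σ, fun n => ?_⟩
  have h1 : a n + x - a (σ n) = (a n + y - a (σ n)) + (x - y) := by abel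
  calc ‖a n + x - a (σ n)‖ ≤ ‖a n + y - a (σ n)‖ + ‖x - y‖ := by
        rw [h1]; exact norm_add_le _ _
    _ < 1 + R := add_lt_add (hσ n) (by rwa [← dist_eq_norm])
    _ = R + 1 := add_comm _ _
end

section
/- If A = {a_n}_{n∈ℕ} ⊆ ℝ^d is a discrete multiset (sequence with no finite limit points) and there exists a sequence r_n ∈ ℝ^d with |r_n| < 1 such that the points a_n + r_n are pairwise distinct, then A is roughly shift-invariant as a multiset if and only if the set A' = {a_n + r_n : n ∈ ℕ} is roughly shift-invariant as a set; moreover if A' is uniformly spread with constant C then A is uniformly spread (as a multiset) with constant C + 2. -/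
open Set

noncomputable section

/-- The multiset `{a_n}` is roughly shift-invariant. -/
def RSImulti {d : ℕ} (a : ℕ → EuclideanSpace ℝ (Fin d)) : Prop :=
  ∃ L : ℝ, ∀ x : EuclideanSpace ℝ (Fin d),
    ∃ σ : ℕ ≃ ℕ, ∀ n : ℕ, ‖a n + x - a (σ n)‖ < L

/-- The set `A` is roughly shift-invariant. -/
def RSIset {d : ℕ} (A : Set (EuclideanSpace ℝ (Fin d))) : Prop :=
  ∃ L : ℝ, ∀ x : EuclideanSpace ℝ (Fin d), ∃ σ : A ≃ A,
    ∀ p : A, ‖(p : EuclideanSpace ℝ (Fin d)) + x - (σ p : EuclideanSpace ℝ (Fin d))‖ < L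

/-- The scaled lattice `D^{-1/d}·ℤ^d`. -/
def lattice {d : ℕ} (D : ℝ) : Set (EuclideanSpace ℝ (Fin d)) :=
  {y | ∀ j, ∃ m : ℤ, y j = D ^ (-(1 : ℝ) / d) * m}

theorem stmt17 {d : ℕ} (a : ℕ → EuclideanSpace ℝ (Fin d))
    (r : ℕ → EuclideanSpace ℝ (Fin d)) (hr : ∀ n, ‖r n‖ < 1)
    (hdisc : ∀ (x : EuclideanSpace ℝ (Fin d)) (ρ : ℝ), {n : ℕ | a n ∈ Metric.ball x ρ}.Finite)
    (hinj : Function.Injective (fun n => a n + r n)) :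
    (RSImulti a ↔ RSIset (Set.range (fun n => a n + r n))) ∧
    (∀ D : ℝ, 0 < D → ∀ C : ℝ,
      (∃ Θ : (Set.range (fun n => a n + r n)) ≃ (lattice D : Set (EuclideanSpace ℝ (Fin d))),
        ∀ p : (Set.range (fun n => a n + r n)),
          ‖(p : EuclideanSpace ℝ (Fin d)) - (Θ p : EuclideanSpace ℝ (Fin d))‖ < C) →
      (∃ Θ : ℕ → (lattice D : Set (EuclideanSpace ℝ (Fin d))), Function.Bijective Θ ∧
        ∀ n : ℕ, ‖a n - (Θ n : EuclideanSpace ℝ (Fin d))‖ < C + 2)) := by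

  classical
  set f : ℕ → EuclideanSpace ℝ (Fin d) := fun n => a n + r n with hf
  let e : ℕ ≃ Set.range f := Equiv.ofInjective f hinj
  have he : ∀ n, (e n : EuclideanSpace ℝ (Fin d)) = a n + r n := fun n => rfl
  constructor
  · constructor
    · rintro ⟨L, hL⟩
      refine ⟨L + 2, fun x => ?_⟩
      obtain ⟨σ, hσ⟩ := hL x
      refine ⟨(e.symm.trans σ).trans e, fun p => ?_⟩
      set n := e.symm p with hn
      have hp : (p : EuclideanSpace ℝ (Fin d)) = a n + r n := by
        rw [← he n, hn, Equiv.apply_symm_apply]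
      have h2 : ((((e.symm.trans σ).trans e) p : Set.range f) :
          EuclideanSpace ℝ (Fin d)) = a (σ n) + r (σ n) := he (σ n)
      have key : (p : EuclideanSpace ℝ (Fin d)) + x -
          ((((e.symm.trans σ).trans e) p : Set.range f) : EuclideanSpace ℝ (Fin d)) =
          (a n + x - a (σ n)) + (r n - r (σ n)) := by
        rw [hp, h2]; abel
      rw [key]
      calc ‖(a n + x - a (σ n)) + (r n - r (σ n))‖
          ≤ ‖a n + x - a (σ n)‖ + ‖r n - r (σ n)‖ := norm_add_le _ _
        _ ≤ ‖a n + x - a (σ n)‖ + (‖r n‖ + ‖r (σ n)‖) := by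
            gcongr; exact norm_sub_le _ _
        _ < L + (1 + 1) := by
            have := hσ n; have h1 := hr n; have h2 := hr (σ n); linarith
        _ = L + 2 := by ring
    · rintro ⟨L, hL⟩
      refine ⟨L + 2, fun x => ?_⟩
      obtain ⟨σ, hσ⟩ := hL x
      refine ⟨(e.trans σ).trans e.symm, fun n => ?_⟩
      set m := e.symm (σ (e n)) with hm
      have hmn : ((e.trans σ).trans e.symm) n = m := rfl
      have hσm : (σ (e n) : EuclideanSpace ℝ (Fin d)) = a m + r m := by
        rw [← he m, hm, Equiv.apply_symm_apply]
      have key : a n + x - a m =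
          ((e n : EuclideanSpace ℝ (Fin d)) + x -
            (σ (e n) : EuclideanSpace ℝ (Fin d))) + (r m - r n) := by
        rw [he n, hσm]; abel
      rw [hmn, key]
      calc ‖((e n : EuclideanSpace ℝ (Fin d)) + x -
            (σ (e n) : EuclideanSpace ℝ (Fin d))) + (r m - r n)‖
          ≤ ‖(e n : EuclideanSpace ℝ (Fin d)) + x -
            (σ (e n) : EuclideanSpace ℝ (Fin d))‖ + ‖r m - r n‖ := norm_add_le _ _
        _ ≤ _ + (‖r m‖ + ‖r n‖) := by gcongr; exact norm_sub_le _ _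
        _ < L + (1 + 1) := by
            have := hσ (e n); have h1 := hr m; have h2 := hr n; linarith
        _ = L + 2 := by ring
  · rintro D hD C ⟨Θ, hΘ⟩
    refine ⟨fun n => Θ (e n), (e.trans Θ).bijective, fun n => ?_⟩
    have key : a n - (Θ (e n) : EuclideanSpace ℝ (Fin d)) =
        ((e n : EuclideanSpace ℝ (Fin d)) - (Θ (e n) : EuclideanSpace ℝ (Fin d))) - r n := by
      rw [he n]; abel
    rw [key]
    calc ‖_ - r n‖ ≤ ‖(e n : EuclideanSpace ℝ (Fin d)) -
          (Θ (e n) : EuclideanSpace ℝ (Fin d))‖ + ‖r n‖ := norm_sub_le _ _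
      _ < C + 2 := by have := hΘ (e n); have := hr n; linarith
end
end
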